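/- If a₁ ≠ 0, b₂ ≠ 0 and c₃ ≠ 0, then the map t ↦ (a₁t+a₀, b₂t²+b₁t+b₀, c₃t³+c₂t²+c₁t+c₀) is a polynomial knot; consequently, under the coefficient identification, P̃₃ equals the set {(a₀,a₁,b₀,b₁,b₂,c₀,c₁,c₂,c₃) ∈ ℝ⁹ : a₁ ≠ 0, b₂ ≠ 0 and c₃ ≠ 0}. -/
import Mathlib


open Polynomial

/-- `(f, g, h)` defines a polynomial knot: the map `t ↦ (f t, g t, h t)` is injective
and its derivative never vanishes. -/
def IsPolyKnot (f g h : Polynomial ℝ) : Prop :=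
  Function.Injective (fun t : ℝ => (f.eval t, g.eval t, h.eval t)) ∧
  ∀ t : ℝ, ((derivative f).eval t, (derivative g).eval t, (derivative h).eval t)
      ≠ ((0 : ℝ), (0 : ℝ), (0 : ℝ))

/-- Inside the space `A₃ ≅ ℝ⁹` of coefficient tuples `(a₀, a₁, b₀, b₁, b₂, c₀, c₁, c₂, c₃)`,
the set `P̃₃` of tuples defining a polynomial knot `(f, g, h)` with
`deg f = 1`, `deg g = 2`, `deg h = 3`. -/
def Pt3 : Set (Fin 9 → ℝ) :=
  {x | IsPolyKnot (C (x 1) * X + C (x 0)) (C (x 4) * X ^ 2 + C (x 3) * X + C (x 2))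
        (C (x 8) * X ^ 3 + C (x 7) * X ^ 2 + C (x 6) * X + C (x 5)) ∧
    (C (x 1) * X + C (x 0)).natDegree = 1 ∧
    (C (x 4) * X ^ 2 + C (x 3) * X + C (x 2)).natDegree = 2 ∧
    (C (x 8) * X ^ 3 + C (x 7) * X ^ 2 + C (x 6) * X + C (x 5)).natDegree = 3}

lemma knot_aux (a₀ a₁ b₀ b₁ b₂ c₀ c₁ c₂ c₃ : ℝ) (ha : a₁ ≠ 0) :
    IsPolyKnot (C a₁ * X + C a₀) (C b₂ * X ^ 2 + C b₁ * X + C b₀)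
      (C c₃ * X ^ 3 + C c₂ * X ^ 2 + C c₁ * X + C c₀) := by
  constructor
  · intro s t hst
    have h1 : a₁ * s + a₀ = a₁ * t + a₀ := by
      simpa using congrArg Prod.fst hst
    have := mul_left_cancel₀ ha (by linarith : a₁ * s = a₁ * t)
    exact this
  · intro t h
    have h1 : (derivative (C a₁ * X + C a₀)).eval t = a₁ := by
      simp
    have := congrArg Prod.fst h
    simp [h1] at this
    exact ha this

/-- If `a₁ ≠ 0`, `b₂ ≠ 0` and `c₃ ≠ 0` then
`t ↦ (a₁t+a₀, b₂t²+b₁t+b₀, c₃t³+c₂t²+c₁t+c₀)` is a polynomial knot; consequently `P̃₃`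
is exactly the set of coefficient tuples with `a₁ ≠ 0`, `b₂ ≠ 0`, `c₃ ≠ 0`. -/
theorem stmt_6 :
    (∀ a₀ a₁ b₀ b₁ b₂ c₀ c₁ c₂ c₃ : ℝ, a₁ ≠ 0 → b₂ ≠ 0 → c₃ ≠ 0 →
      IsPolyKnot (C a₁ * X + C a₀) (C b₂ * X ^ 2 + C b₁ * X + C b₀)
        (C c₃ * X ^ 3 + C c₂ * X ^ 2 + C c₁ * X + C c₀)) ∧
    Pt3 = {x : Fin 9 → ℝ | x 1 ≠ 0 ∧ x 4 ≠ 0 ∧ x 8 ≠ 0} := by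
  constructor
  · intro a₀ a₁ b₀ b₁ b₂ c₀ c₁ c₂ c₃ ha _ _
    exact knot_aux a₀ a₁ b₀ b₁ b₂ c₀ c₁ c₂ c₃ ha
  · ext x
    simp only [Pt3, Set.mem_setOf_eq]
    constructor
    · rintro ⟨_, h1, h2, h3⟩
      refine ⟨?_, ?_, ?_⟩
      · intro h; rw [h] at h1; simp at h1
      · intro h; rw [h] at h2
        have : (C (0:ℝ) * X ^ 2 + C (x 3) * X + C (x 2)).natDegree ≤ 1 := by
          simp only [map_zero, zero_mul, zero_add]
          compute_degree
        omega
      · intro h; rw [h] at h3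
        have : (C (0:ℝ) * X ^ 3 + C (x 7) * X ^ 2 + C (x 6) * X + C (x 5)).natDegree ≤ 2 := by
          simp only [map_zero, zero_mul, zero_add]
          compute_degree
        omega
    · rintro ⟨h1, h4, h8⟩
      refine ⟨knot_aux _ _ _ _ _ _ _ _ _ h1, ?_, ?_, ?_⟩
      · compute_degree!
      · compute_degree!
      · compute_degree!
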